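/- arXiv:2110.09560 — 7 statements merged into one kernel-verified Lean document; each statement's English description precedes it below -/
import Mathlib

section
/- Let f : [0,∞) → ℝ be càdlàg, fix t ≥ 0, and set T = sup{ s ∈ [0,t] : f(s−) ∧ f(s) = inf_{u ∈ [0,s]} f(u) } (with f(0−) := f(0)). Then inf_{s ∈ [0,t]} (f(s) ∧ 0) = f(T−) ∧ f(T) ∧ 0. -/
/-!
The lower envelope `g s = f(s-) ⊓ f s` of a càdlàg `f` is lower semicontinuous on `[0,∞)` and
has the same lower bounds as `f` on every `[0,s]`; hence `inf_{[0,s]} f` is attained by `g`, and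
the condition on `s` in the definition of `T` says exactly that `s` is a running-minimum time of
`g`, i.e. a minimiser of `g` on `[0,s]`. For a lower semicontinuous function the running-minimum
times in `[0,t]` form a closed set, so their supremum `T` is one of them; it lies after any
minimiser of `g` on `[0,t]`, so `g T = inf_{[0,t]} f`, and taking `⊓ 0`
commutes with the infimum since it is monotone and continuous.
-/

open MeasureTheory Filter Topology Set

/-- A function `f : ℝ → ℝ` viewed on `[0,∞)` is càdlàg. -/
def Cadlag (f : ℝ → ℝ) : Prop :=
  (∀ t : ℝ, 0 ≤ t → ContinuousWithinAt f (Set.Ici t) t) ∧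
  (∀ t : ℝ, 0 < t → ∃ l : ℝ, Filter.Tendsto f (nhdsWithin t (Set.Iio t)) (nhds l))

section RunningMinimum

variable {α β : Type*} [LinearOrder β] {g : α → β} {a b : α}

def runningMinTimes [Preorder α] (g : α → β) (a b : α) : Set α :=
  {s | s ∈ Icc a b ∧ IsMinOn g (Icc a s) s}

theorem LowerSemicontinuousOn.isClosed_runningMinTimes [TopologicalSpace α] [LinearOrder α]
    [OrderClosedTopology α] (hg : LowerSemicontinuousOn g (Icc a b)) :
    IsClosed (runningMinTimes g a b) := by
  set S := runningMinTimes g a b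
  refine closure_subset_iff_isClosed.1 fun x hx => ?_
  have hxI : x ∈ Icc a b := closure_minimal (fun s (hs : s ∈ S) => hs.1) isClosed_Icc hx
  refine ⟨hxI, isMinOn_iff.2 fun u hu => ?_⟩
  rcases hu.2.eq_or_lt with rfl | hux
  · exact le_rfl
  have : (𝓝[S] x).NeBot := mem_closure_iff_nhdsWithin_neBot.1 hx
  refine le_of_forall_lt fun y hy => ?_
  -- lower semicontinuity at `x` along running-minimum times `v > u`, at which `g v ≤ g u`
  obtain ⟨v, hyv, huv, hvS⟩ := (((hg x hxI).mono fun s hs => hs.1) y hy |>.and <|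
    (eventually_nhdsWithin_of_eventually_nhds (eventually_gt_nhds hux)).and
      (self_mem_nhdsWithin : S ∈ 𝓝[S] x)).exists
  exact hyv.trans_le (isMinOn_iff.1 hvS.2 u ⟨hu.1, huv.le⟩)

theorem LowerSemicontinuousOn.sSup_runningMinTimes_mem [ConditionallyCompleteLinearOrder α]
    [TopologicalSpace α] [OrderTopology α] (hab : a ≤ b)
    (hg : LowerSemicontinuousOn g (Icc a b)) :
    sSup (runningMinTimes g a b) ∈ runningMinTimes g a b ∧
      IsMinOn g (Icc a b) (sSup (runningMinTimes g a b)) := by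
  set S := runningMinTimes g a b
  have hbdd : BddAbove S := ⟨b, fun s hs => hs.1.2⟩
  have haS : a ∈ S := ⟨⟨le_rfl, hab⟩, by simp [isMinOn_iff]⟩
  have hTS : sSup S ∈ S := hg.isClosed_runningMinTimes.csSup_mem ⟨a, haS⟩ hbdd
  obtain ⟨m, hm, hmin⟩ := hg.exists_isMinOn (nonempty_Icc.2 hab) isCompact_Icc
  have hmS : m ∈ S := ⟨hm, hmin.on_subset (Icc_subset_Icc_right hm.2)⟩
  refine ⟨hTS, isMinOn_iff.2 fun u hu => ?_⟩
  exact (isMinOn_iff.1 hTS.2 m ⟨hm.1, le_csSup hbdd hmS⟩).trans (isMinOn_iff.1 hmin u hu)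

end RunningMinimum

section LeftLimit

variable {f flm : ℝ → ℝ}

theorem lowerBounds_image_inf_leftLim (hflm0 : flm 0 = f 0)
    (hflm : ∀ s, 0 < s → Tendsto f (𝓝[<] s) (𝓝 (flm s))) (s : ℝ) :
    lowerBounds ((flm ⊓ f) '' Icc 0 s) = lowerBounds (f '' Icc 0 s) := by
  ext c
  simp only [mem_lowerBounds, forall_mem_image]
  refine ⟨fun h u hu => (h hu).trans inf_le_right, fun h u hu => le_inf ?_ (h hu)⟩
  rcases hu.1.eq_or_lt with rfl | hu0
  · exact hflm0 ▸ h hu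
  · exact ge_of_tendsto (hflm u hu0) <| mem_of_superset (Ioo_mem_nhdsLT hu0)
      fun v hv => h ⟨hv.1.le, hv.2.le.trans hu.2⟩

theorem eventually_lt_of_lt_inf_leftLim (hf : ∀ x, 0 ≤ x → ContinuousWithinAt f (Ici x) x)
    (hflm : ∀ s, 0 < s → Tendsto f (𝓝[<] s) (𝓝 (flm s))) {x y : ℝ} (hx : 0 ≤ x)
    (hy : y < (flm ⊓ f) x) : ∀ᶠ v in 𝓝[Ici 0] x, y < f v := by
  have hright : ∀ᶠ v in 𝓝[≥] x, y < f v :=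
    (hf x hx).eventually (eventually_gt_nhds (hy.trans_le inf_le_right))
  rcases hx.eq_or_lt with rfl | hx
  · exact hright
  rw [nhdsWithin_eq_nhds.2 (Ici_mem_nhds hx), ← nhdsLT_sup_nhdsGE]
  exact ⟨(hflm x hx).eventually (eventually_gt_nhds (hy.trans_le inf_le_left)), hright⟩

theorem lowerSemicontinuousOn_inf_leftLim (hf : ∀ x, 0 ≤ x → ContinuousWithinAt f (Ici x) x)
    (hflm0 : flm 0 = f 0) (hflm : ∀ s, 0 < s → Tendsto f (𝓝[<] s) (𝓝 (flm s))) :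
    LowerSemicontinuousOn (flm ⊓ f) (Ici 0) := by
  intro x hx y hy
  obtain ⟨y', hyy', hy'⟩ := exists_between hy
  have h := eventually_lt_of_lt_inf_leftLim hf hflm hx hy'
  filter_upwards [eventually_eventually_nhdsWithin.2 h, h, self_mem_nhdsWithin]
    with u hu hfu (hu0 : 0 ≤ u)
  refine lt_inf_iff.2 ⟨?_, hyy'.trans hfu⟩
  rcases hu0.eq_or_lt with rfl | hu0
  · exact hflm0 ▸ hyy'.trans hfu
  rw [nhdsWithin_eq_nhds.2 (Ici_mem_nhds hu0)] at hu
  exact hyy'.trans_le <| ge_of_tendsto (hflm u hu0) <|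
    (hu.filter_mono nhdsWithin_le_nhds).mono fun _ => le_of_lt

theorem isGLB_image_of_isMinOn_inf_leftLim (hflm0 : flm 0 = f 0)
    (hflm : ∀ s, 0 < s → Tendsto f (𝓝[<] s) (𝓝 (flm s))) {s m : ℝ} (hm : m ∈ Icc 0 s)
    (hmin : IsMinOn (flm ⊓ f) (Icc 0 s) m) : IsGLB (f '' Icc 0 s) ((flm ⊓ f) m) := by
  have h : IsGLB ((flm ⊓ f) '' Icc 0 s) ((flm ⊓ f) m) := hmin.isGLB hm
  rwa [IsGLB, lowerBounds_image_inf_leftLim hflm0 hflm] at h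

theorem inf_leftLim_eq_sInf_iff_isMinOn (hlsc : LowerSemicontinuousOn (flm ⊓ f) (Ici 0))
    (hflm0 : flm 0 = f 0) (hflm : ∀ s, 0 < s → Tendsto f (𝓝[<] s) (𝓝 (flm s))) {s : ℝ}
    (hs : 0 ≤ s) : (flm ⊓ f) s = sInf (f '' Icc 0 s) ↔ IsMinOn (flm ⊓ f) (Icc 0 s) s := by
  obtain ⟨m, hm, hmin⟩ := (hlsc.mono Icc_subset_Ici_self).exists_isMinOn (nonempty_Icc.2 hs)
    isCompact_Icc
  rw [(isGLB_image_of_isMinOn_inf_leftLim hflm0 hflm hm hmin).csInf_eq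
    ((nonempty_Icc.2 hs).image f), isMinOn_iff]
  refine ⟨fun h u hu => h ▸ hmin hu, fun h => le_antisymm (h m hm) (hmin ⟨hs, le_rfl⟩)⟩

end LeftLimit

/-- for a càdlàg `f`, `t ≥ 0`, and
`T = sup{ s ∈ [0,t] : f(s-) ∧ f(s) = inf_{u∈[0,s]} f(u) }` (with `f(0-) := f 0`,
encoded by a function `flm` giving the left limits), we have
`inf_{s∈[0,t]} (f s ∧ 0) = f(T-) ∧ f(T) ∧ 0`. -/
theorem stmt2 (f : ℝ → ℝ) (hf : Cadlag f) (t : ℝ) (ht : 0 ≤ t)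
    (flm : ℝ → ℝ) (hflm0 : flm 0 = f 0)
    (hflm : ∀ s : ℝ, 0 < s → Filter.Tendsto f (nhdsWithin s (Set.Iio s)) (nhds (flm s)))
    (T : ℝ)
    (hT : T = sSup {s : ℝ | s ∈ Set.Icc 0 t ∧
      min (flm s) (f s) = sInf (f '' Set.Icc 0 s)}) :
    sInf ((fun s => min (f s) 0) '' Set.Icc 0 t) = min (flm T) (min (f T) 0) := by
  have hlsc := lowerSemicontinuousOn_inf_leftLim hf.1 hflm0 hflm
  have hS : {s : ℝ | s ∈ Icc 0 t ∧ min (flm s) (f s) = sInf (f '' Icc 0 s)} =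
      runningMinTimes (flm ⊓ f) 0 t :=
    ext fun s => and_congr_right fun hs => inf_leftLim_eq_sInf_iff_isMinOn hlsc hflm0 hflm hs.1
  rw [hS] at hT
  obtain ⟨⟨hTt, -⟩, hTmin⟩ :=
    hT ▸ (hlsc.mono Icc_subset_Ici_self).sSup_runningMinTimes_mem ht
  have hglb := isGLB_image_of_isMinOn_inf_leftLim hflm0 hflm hTt hTmin
  rw [← image_image (fun x => min x 0) f,
    ← Monotone.map_csInf_of_continuousAt (f := fun x : ℝ => min x 0)
    (continuous_id.min continuous_const).continuousAt (fun _ _ h => min_le_min_right 0 h)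
    ((nonempty_Icc.2 ht).image f) hglb.bddBelow, hglb.csInf_eq ((nonempty_Icc.2 ht).image f)]
  exact min_assoc _ _ _
end

section
/- Let x : [0,∞) → ℝ be a càdlàg function of bounded variation satisfying x_t = x_0 + δ t + Σ_{s ∈ (0,t]} (x_s − x_{s−}) for all t ≥ 0, with δ > 0. Define I_t = inf_{s ∈ [0,t]} (x_s ∧ 0) and x̌_t = x_t − I_t. Then for every t ≥ 0, I_t = (x_0 ∧ 0) + Σ_{s ∈ (0,t]} ( x̌_{s−} + (x_s − x_{s−}) ) ∧ 0. -/
open MeasureTheory Filter Topology Set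

/-!
Since the drift is nonnegative, `x` can only go down through its jumps:
`x p - x u ≤ ∑_{(p,u]} |Δx|`, and the same bound passes to the truncated running infimum `I`.
An antitone function whose decrease on every subinterval is dominated by a summable family of
point masses has no continuous part: its total decrease is the sum of its jumps. Finally
`I v = min (I (v-)) (x v ∧ 0)`, so `Δ I v = (x v - I (v-)) ∧ 0 = (x̌ (v-) + Δ x v) ∧ 0`.
-/
theorem Finset.exists_mem_Ico_forall_le {α : Type*} [LinearOrder α] {a m : α} (s : Finset α)
    (ham : a < m) (hs : ∀ x ∈ s, x < m) : ∃ c ∈ Set.Ico a m, ∀ x ∈ s, x ≤ c := by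
  refine ⟨(insert a s).max' (insert_nonempty a s),
    ⟨le_max' _ _ (mem_insert_self a s), ?_⟩, fun x hx ↦ le_max' _ _ (mem_insert_of_mem hx)⟩
  rw [max'_lt_iff]
  simpa [ham] using hs

section SubtypeSums

variable {α : Type*} {S T : Set α} {g : α → ℝ}

theorem summable_subtype_of_subset (hST : S ⊆ T) (hg : Summable fun v : T ↦ g v) :
    Summable fun v : S ↦ g v :=
  hg.comp_injective (inclusion_injective hST)

theorem tsum_subtype_le_of_subset (hST : S ⊆ T) (hg0 : ∀ v ∈ T, 0 ≤ g v)
    (hg : Summable fun v : T ↦ g v) : ∑' v : S, g v ≤ ∑' v : T, g v :=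
  (summable_subtype_of_subset hST hg).tsum_le_tsum_of_inj (inclusion hST)
    (inclusion_injective hST) (fun v _ ↦ hg0 v v.2) (fun _ ↦ le_rfl) hg

theorem sum_le_tsum_subtype {F : Finset α} (hF : ↑F ⊆ T) (hg0 : ∀ v ∈ T, 0 ≤ g v)
    (hg : Summable fun v : T ↦ g v) : ∑ v ∈ F, g v ≤ ∑' v : T, g v := by
  rw [← Finset.tsum_subtype']
  exact tsum_subtype_le_of_subset hF hg0 hg

theorem sum_subtype_le_of_forall_finset_subset_le {c : ℝ}
    (h : ∀ F : Finset α, ↑F ⊆ T → ∑ v ∈ F, g v ≤ c) (G : Finset T) : ∑ v ∈ G, g v ≤ c := by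
  simpa [Finset.sum_map] using h (G.map (Function.Embedding.subtype _)) (by simp)

theorem summable_subtype_of_forall_finset_subset_le {c : ℝ} (hg0 : ∀ v ∈ T, 0 ≤ g v)
    (h : ∀ F : Finset α, ↑F ⊆ T → ∑ v ∈ F, g v ≤ c) : Summable fun v : T ↦ g v :=
  summable_of_sum_le (fun v ↦ hg0 v v.2) (sum_subtype_le_of_forall_finset_subset_le h)

theorem tsum_subtype_le_of_forall_finset_subset_le {c : ℝ} (hg0 : ∀ v ∈ T, 0 ≤ g v)
    (h : ∀ F : Finset α, ↑F ⊆ T → ∑ v ∈ F, g v ≤ c) : ∑' v : T, g v ≤ c :=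
  (summable_subtype_of_forall_finset_subset_le hg0 h).tsum_le_of_sum_le
    (sum_subtype_le_of_forall_finset_subset_le h)

theorem tsum_Ioo_eq_add_add [LinearOrder α] {p m q : α} (hpm : p < m) (hmq : m < q)
    (hg : Summable fun v : Ioo p q ↦ g v) :
    ∑' v : Ioo p q, g v = ∑' v : Ioo p m, g v + g m + ∑' v : Ioo m q, g v := by
  have hsub : Ioc p m ∪ Ioo m q = Ioo p q := Ioc_union_Ioo_eq_Ioo hpm.le hmq
  have hdisj : Disjoint (Ioc p m) (Ioo m q) :=
    disjoint_left.2 fun v hv hv' ↦ (hv.2.trans_lt hv'.1).false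
  have hIoc : Summable fun v : Ioc p m ↦ g v :=
    summable_subtype_of_subset (fun v hv ↦ hsub ▸ Or.inl hv) hg
  rw [← hsub, Summable.tsum_union_disjoint hdisj hIoc
      (summable_subtype_of_subset (fun v hv ↦ hsub ▸ Or.inr hv) hg),
    ← Ioo_union_right hpm, Summable.tsum_union_disjoint
      (disjoint_singleton_right.2 fun h ↦ h.2.false)
      (summable_subtype_of_subset Ioo_subset_Ioc_self hIoc) ((finite_singleton m).summable _),
    tsum_singleton]

end SubtypeSums

theorem BoundedVariationOn.bddBelow_image {α : Type*} [LinearOrder α] {f : α → ℝ} {s : Set α}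
    (hf : BoundedVariationOn f s) : BddBelow (f '' s) := by
  rcases s.eq_empty_or_nonempty with rfl | ⟨a, ha⟩
  · simp
  refine ⟨f a - (eVariationOn f s).toReal, ?_⟩
  rintro _ ⟨y, hy, rfl⟩
  have := hf.dist_le ha hy
  rw [Real.dist_eq] at this
  linarith [le_abs_self (f a - f y)]

section BoundedVariation

variable {E : Type*} [NormedAddCommGroup E] [CompleteSpace E] {f : ℝ → E} {a b : ℝ}

theorem BoundedVariationOn.tendsto_leftLim_of_mem_Ioc (hf : BoundedVariationOn f (Icc a b))
    {c : ℝ} (hc : c ∈ Ioc a b) : Tendsto f (𝓝[<] c) (𝓝 (Function.leftLim f c)) := by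
  obtain ⟨l, hl⟩ := hf.exists_tendsto_left c
  have hmem : Icc a b ∈ 𝓝[<] c :=
    mem_of_superset (Ioo_mem_nhdsLT hc.1) fun v hv ↦ ⟨hv.1.le, hv.2.le.trans hc.2⟩
  rw [nhdsWithin_inter_of_mem hmem] at hl
  exact tendsto_leftLim_of_tendsto ⟨l, hl⟩

theorem BoundedVariationOn.sum_edist_leftLim_le (hf : BoundedVariationOn f (Icc a b))
    {F : Finset ℝ} (hF : ↑F ⊆ Ioc a b) :
    ∑ v ∈ F, edist (f v) (Function.leftLim f v) ≤ eVariationOn f (Icc a b) := by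
  classical
  induction F using Finset.induction_on_max generalizing b with
  | empty => simp
  | insert m s hlt ih =>
    have hm : m ∈ Ioc a b := hF (by simp)
    obtain ⟨c, hc, hsc⟩ := s.exists_mem_Ico_forall_le hm.1 hlt
    have hs : ↑s ⊆ Ioc a c := fun v hv ↦ ⟨(hF (by simp [Finset.mem_coe.mp hv])).1, hsc v hv⟩
    have hleft : Tendsto f (𝓝[Icc a m ∩ Iio m] m) (𝓝 (Function.leftLim f m)) :=
      ((hf.mono (Icc_subset_Icc_right hm.2)).tendsto_leftLim_of_mem_Ioc ⟨hm.1, le_rfl⟩).mono_left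
        (nhdsWithin_mono _ inter_subset_right)
    have hIco : Icc a m ∩ Iio m = Ico a m := by
      ext v
      simp only [mem_inter_iff, mem_Icc, mem_Iio, mem_Ico]
      exact ⟨fun h ↦ ⟨h.1.1, h.2⟩, fun h ↦ ⟨⟨h.1, h.2.le⟩, h.2⟩⟩
    have hsplit := eVariationOn.eVariationOn_on_inter_Iic_eq_Iio_add_edist
      (by rw [hIco]; exact right_nhdsWithin_Ico_neBot hm.1)
      (show m ∈ Icc a m from ⟨hm.1.le, le_rfl⟩) hleft
    rw [inter_eq_left.2 fun v hv ↦ hv.2, hIco] at hsplit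
    rw [Finset.sum_insert fun h ↦ (hlt m h).false]
    calc edist (f m) (Function.leftLim f m) + ∑ v ∈ s, edist (f v) (Function.leftLim f v)
        ≤ eVariationOn f (Ico a m) + edist (f m) (Function.leftLim f m) := by
          rw [add_comm]
          gcongr
          exact (ih (hf.mono (Icc_subset_Icc_right (hc.2.le.trans hm.2))) hs).trans
            (eVariationOn.mono f (Icc_subset_Ico_right hc.2))
      _ = eVariationOn f (Icc a m) := hsplit.symm
      _ ≤ eVariationOn f (Icc a b) := eVariationOn.mono f (Icc_subset_Icc_right hm.2)

theorem BoundedVariationOn.summable_norm_sub_leftLim (hf : BoundedVariationOn f (Icc a b)) :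
    Summable fun v : Ioc a b ↦ ‖f v - Function.leftLim f v‖ := by
  refine summable_subtype_of_forall_finset_subset_le (g := fun v ↦ ‖f v - Function.leftLim f v‖)
    (c := (eVariationOn f (Icc a b)).toReal) (fun _ _ ↦ norm_nonneg _) fun F hF ↦ ?_
  rw [← ENNReal.ofReal_le_iff_le_toReal hf, ENNReal.ofReal_sum_of_nonneg fun _ _ ↦ norm_nonneg _]
  convert hf.sum_edist_leftLim_le hF using 2 with v
  rw [edist_dist, dist_eq_norm]

end BoundedVariation

section AntitoneJumps

variable {f w : ℝ → ℝ} {a b : ℝ}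

theorem Antitone.sum_leftLim_sub_le (hf : Antitone f) (hab : a ≤ b) {F : Finset ℝ}
    (hF : ↑F ⊆ Ioc a b) : ∑ v ∈ F, (Function.leftLim f v - f v) ≤ f a - f b := by
  classical
  induction F using Finset.induction_on_max generalizing b with
  | empty => simpa using hf hab
  | insert m s hlt ih =>
    have hm : m ∈ Ioc a b := hF (by simp)
    obtain ⟨c, hc, hsc⟩ := s.exists_mem_Ico_forall_le hm.1 hlt
    have hs : ↑s ⊆ Ioc a c := fun v hv ↦ ⟨(hF (by simp [Finset.mem_coe.mp hv])).1, hsc v hv⟩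
    rw [Finset.sum_insert fun h ↦ (hlt m h).false]
    linarith [ih hc.1 hs, hf.leftLim_le hc.2, hf hm.2]

theorem Antitone.summable_leftLim_sub (hf : Antitone f) (hab : a ≤ b) :
    Summable fun v : Ioc a b ↦ Function.leftLim f v - f v :=
  summable_subtype_of_forall_finset_subset_le (g := fun v ↦ Function.leftLim f v - f v)
    (fun _ _ ↦ sub_nonneg.2 (hf.le_leftLim le_rfl)) fun _ hF ↦ hf.sum_leftLim_sub_le hab hF

theorem Antitone.tsum_leftLim_sub_le (hf : Antitone f) (hab : a ≤ b) :
    ∑' v : Ioc a b, (Function.leftLim f v - f v) ≤ f a - f b :=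
  tsum_subtype_le_of_forall_finset_subset_le (g := fun v ↦ Function.leftLim f v - f v)
    (fun _ _ ↦ sub_nonneg.2 (hf.le_leftLim le_rfl)) fun _ hF ↦ hf.sum_leftLim_sub_le hab hF

variable (hw0 : ∀ v ∈ Ioc a b, 0 ≤ w v) (hw : Summable fun v : Ioc a b ↦ w v)
  (hdom : ∀ p u, a ≤ p → p ≤ u → u ≤ b → f p - f u ≤ ∑' v : Ioc p u, w v)
include hw0 hw hdom

theorem Antitone.sub_leftLim_le_tsum (hf : Antitone f) {p q : ℝ} (hap : a ≤ p) (hpq : p < q)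
    (hqb : q ≤ b) : f p - Function.leftLim f q ≤ ∑' v : Ioo p q, w v := by
  have hsub : Ioo p q ⊆ Ioc a b := fun v hv ↦ ⟨hap.trans_lt hv.1, hv.2.le.trans hqb⟩
  refine _root_.le_of_tendsto (tendsto_const_nhds.sub (hf.tendsto_leftLim q)) ?_
  filter_upwards [Ioo_mem_nhdsLT hpq] with u hu
  calc f p - f u ≤ ∑' v : Ioc p u, w v := hdom p u hap hu.1.le (hu.2.le.trans hqb)
    _ ≤ ∑' v : Ioo p q, w v :=
      tsum_subtype_le_of_subset (Ioc_subset_Ioo_right hu.2) (fun v hv ↦ hw0 v (hsub hv))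
        (summable_subtype_of_subset hsub hw)

/- Cutting `(a, q)` at the points of `F`, the decrease of `f` strictly between two consecutive cuts
is at most the `w`-mass there; only the jumps at the cuts themselves remain. -/
theorem Antitone.sub_leftLim_le_sum_add_tsum (hf : Antitone f) {F : Finset ℝ} {q : ℝ}
    (haq : a < q) (hqb : q ≤ b) (hF : ↑F ⊆ Ioo a q) :
    f a - Function.leftLim f q ≤
      ∑ v ∈ F, (Function.leftLim f v - f v) + (∑' v : Ioo a q, w v - ∑ v ∈ F, w v) := by
  classical
  induction F using Finset.induction_on_max generalizing q with
  | empty => simpa using hf.sub_leftLim_le_tsum hw0 hw hdom le_rfl haq hqb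
  | insert m s hlt ih =>
    have hm : m ∈ Ioo a q := hF (by simp)
    have hs : ↑s ⊆ Ioo a m := fun v hv ↦ ⟨(hF (by simp [Finset.mem_coe.mp hv])).1, hlt v hv⟩
    have hsubq : Ioo a q ⊆ Ioc a b := fun v hv ↦ ⟨hv.1, hv.2.le.trans hqb⟩
    have hsplit := tsum_Ioo_eq_add_add hm.1 hm.2 (summable_subtype_of_subset hsubq hw)
    have hright := hf.sub_leftLim_le_tsum hw0 hw hdom hm.1.le hm.2 hqb
    rw [Finset.sum_insert fun h ↦ (hlt m h).false, Finset.sum_insert fun h ↦ (hlt m h).false]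
    linarith [ih hm.1 (hm.2.le.trans hqb) hs]

theorem Antitone.sub_eq_tsum_leftLim_sub (hf : Antitone f) (hab : a ≤ b) :
    f a - f b = ∑' v : Ioc a b, (Function.leftLim f v - f v) := by
  refine le_antisymm ?_ (hf.tsum_leftLim_sub_le hab)
  rcases hab.eq_or_lt with rfl | hab
  · simp
  set T := ∑' v : Ioc a b, (Function.leftLim f v - f v)
  have hwIoo : Summable fun v : Ioo a b ↦ w v := summable_subtype_of_subset Ioo_subset_Ioc_self hw
  have key : ∀ G : Finset (Ioo a b), f a - f b ≤ T + (∑' v : Ioo a b, w v - ∑ v ∈ G, w v) := by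
    intro G
    set F := G.map (Function.Embedding.subtype _)
    have hF : ↑F ⊆ Ioo a b := by simp [F]
    have hbF : b ∉ F := fun h ↦ (hF h).2.false
    have hT : ∑ v ∈ insert b F, (Function.leftLim f v - f v) ≤ T :=
      sum_le_tsum_subtype (by
          rw [Finset.coe_insert]
          exact insert_subset (right_mem_Ioc.2 hab) (hF.trans Ioo_subset_Ioc_self))
        (fun _ _ ↦ sub_nonneg.2 (hf.le_leftLim le_rfl)) (hf.summable_leftLim_sub hab.le)
    have hGF : ∑ v ∈ F, w v = ∑ v ∈ G, w v := Finset.sum_map _ _ _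
    rw [Finset.sum_insert hbF] at hT
    linarith [hf.sub_leftLim_le_sum_add_tsum hw0 hw hdom hab le_rfl hF]
  have hlim : Tendsto (fun G : Finset (Ioo a b) ↦ T + (∑' v : Ioo a b, w v - ∑ v ∈ G, w v))
      atTop (𝓝 (T + (∑' v : Ioo a b, w v - ∑' v : Ioo a b, w v))) :=
    tendsto_const_nhds.add (tendsto_const_nhds.sub hwIoo.hasSum)
  simpa using ge_of_tendsto' hlim key

end AntitoneJumps

noncomputable def truncRunningInf (x : ℝ → ℝ) (t : ℝ) : ℝ := sInf ((fun s ↦ min (x s) 0) '' Icc 0 t)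

section TruncRunningInf

variable {x : ℝ → ℝ}

theorem truncRunningInf_zero : truncRunningInf x 0 = min (x 0) 0 := by
  simp [truncRunningInf]

theorem truncRunningInf_of_neg {t : ℝ} (ht : t < 0) : truncRunningInf x t = 0 := by
  simp [truncRunningInf, Icc_eq_empty (not_le.2 ht)]

theorem le_truncRunningInf {c t : ℝ} (ht : 0 ≤ t) (h : ∀ s ∈ Icc 0 t, c ≤ min (x s) 0) :
    c ≤ truncRunningInf x t :=
  le_csInf ⟨_, mem_image_of_mem _ (left_mem_Icc.2 ht)⟩ (by rintro _ ⟨s, hs, rfl⟩; exact h s hs)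

variable (hx : ∀ t, 0 ≤ t → BddBelow (x '' Icc 0 t))
include hx

theorem truncRunningInf_le {s t : ℝ} (hs : s ∈ Icc 0 t) : truncRunningInf x t ≤ min (x s) 0 := by
  refine csInf_le ?_ (mem_image_of_mem _ hs)
  rw [← image_image (fun y ↦ min y 0)]
  exact Monotone.map_bddBelow (fun _ _ h ↦ min_le_min_right 0 h) (hx t (hs.1.trans hs.2))

theorem truncRunningInf_nonpos (t : ℝ) : truncRunningInf x t ≤ 0 := by
  rcases lt_or_ge t 0 with ht | ht
  · exact (truncRunningInf_of_neg ht).le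
  · exact (truncRunningInf_le hx (left_mem_Icc.2 ht)).trans (min_le_right _ _)

/-- For `t < 0` the infimum is over the empty set, hence the junk value `sInf ∅ = 0`; this still
makes the function antitone on all of `ℝ`. -/
theorem antitone_truncRunningInf : Antitone (truncRunningInf x) := by
  intro s t hst
  rcases lt_or_ge s 0 with hs | hs
  · rw [truncRunningInf_of_neg hs]
    exact truncRunningInf_nonpos hx t
  · exact le_truncRunningInf hs fun u hu ↦ truncRunningInf_le hx ⟨hu.1, hu.2.trans hst⟩

theorem truncRunningInf_eq_min_leftLim {v : ℝ} (hv : 0 < v) :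
    truncRunningInf x v = min (Function.leftLim (truncRunningInf x) v) (min (x v) 0) := by
  have hanti := antitone_truncRunningInf hx
  refine le_antisymm (le_min (hanti.le_leftLim le_rfl) (truncRunningInf_le hx ⟨hv.le, le_rfl⟩)) ?_
  refine le_truncRunningInf hv.le fun s hs ↦ ?_
  rcases hs.2.lt_or_eq with hsv | rfl
  · exact (min_le_left _ _).trans
      ((hanti.leftLim_le hsv).trans (truncRunningInf_le hx ⟨hs.1, le_rfl⟩))
  · exact min_le_right _ _

theorem truncRunningInf_sub_leftLim {v : ℝ} (hv : 0 < v) :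
    truncRunningInf x v - Function.leftLim (truncRunningInf x) v =
      min (x v - Function.leftLim (truncRunningInf x) v) 0 := by
  have hL : Function.leftLim (truncRunningInf x) v ≤ 0 :=
    ((antitone_truncRunningInf hx).leftLim_le hv).trans (truncRunningInf_nonpos hx 0)
  rw [truncRunningInf_eq_min_leftLim hx hv]
  simp only [min_def]
  split_ifs <;> linarith

theorem truncRunningInf_sub_le {p u W : ℝ} (hp : 0 ≤ p) (hpu : p ≤ u) (hW : 0 ≤ W)
    (hdrop : ∀ s ∈ Ioc p u, x p - x s ≤ W) : truncRunningInf x p - truncRunningInf x u ≤ W := by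
  have hIp : truncRunningInf x p ≤ min (x p) 0 := truncRunningInf_le hx ⟨hp, le_rfl⟩
  suffices truncRunningInf x p - W ≤ truncRunningInf x u by linarith
  refine le_truncRunningInf (hp.trans hpu) fun s hs ↦ ?_
  rcases le_or_gt s p with hsp | hps
  · linarith [truncRunningInf_le hx (⟨hs.1, hsp⟩ : s ∈ Icc 0 p)]
  · have := hdrop s ⟨hps, hs.2⟩
    exact le_min (by linarith [min_le_left (x p) 0]) (by linarith [min_le_right (x p) 0])

end TruncRunningInf

section DriftPlusJumps

variable {x : ℝ → ℝ} {δ : ℝ}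
  (hbv : ∀ t : ℝ, 0 ≤ t → BoundedVariationOn x (Set.Icc 0 t))
include hbv

theorem summable_abs_sub_leftLim {p u : ℝ} (hp : 0 ≤ p) (hpu : p ≤ u) :
    Summable fun v : Ioc p u ↦ |x v - Function.leftLim x v| := by
  simpa only [Real.norm_eq_abs] using
    ((hbv u (hp.trans hpu)).mono (Icc_subset_Icc_left hp)).summable_norm_sub_leftLim

theorem sub_eq_drift_add_tsum_jump
    (hdecomp : ∀ t : ℝ, 0 ≤ t →
      x t = x 0 + δ * t + ∑' s : Set.Ioc (0:ℝ) t, (x s - Function.leftLim x s))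
    {p u : ℝ} (hp : 0 ≤ p) (hpu : p ≤ u) :
    x u - x p = δ * (u - p) + ∑' v : Ioc p u, (x v - Function.leftLim x v) := by
  have hsum : ∀ {a b : ℝ}, 0 ≤ a → a ≤ b → Summable fun v : Ioc a b ↦ x v - Function.leftLim x v :=
    fun ha hab ↦ (summable_abs_sub_leftLim hbv ha hab).of_abs
  have hsplit := Summable.tsum_union_disjoint (f := fun v ↦ x v - Function.leftLim x v)
    (Ioc_disjoint_Ioc_of_le le_rfl) (hsum le_rfl hp) (hsum hp hpu)
  rw [Ioc_union_Ioc_eq_Ioc hp hpu] at hsplit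
  rw [hdecomp u (hp.trans hpu), hdecomp p hp, hsplit]
  ring

theorem sub_le_tsum_abs_jump (hδ : 0 ≤ δ)
    (hdecomp : ∀ t : ℝ, 0 ≤ t →
      x t = x 0 + δ * t + ∑' s : Set.Ioc (0:ℝ) t, (x s - Function.leftLim x s))
    {p u : ℝ} (hp : 0 ≤ p) (hpu : p ≤ u) :
    x p - x u ≤ ∑' v : Ioc p u, |x v - Function.leftLim x v| := by
  have habs := summable_abs_sub_leftLim hbv hp hpu
  have hneg : ∑' v : Ioc p u, -(x v - Function.leftLim x v) ≤
      ∑' v : Ioc p u, |x v - Function.leftLim x v| :=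
    Summable.tsum_le_tsum (fun _ ↦ neg_le_abs _) habs.of_abs.neg habs
  rw [tsum_neg] at hneg
  linarith [sub_eq_drift_add_tsum_jump hbv hdecomp hp hpu, mul_nonneg hδ (sub_nonneg.2 hpu)]

theorem truncRunningInf_sub_le_tsum_abs_jump (hδ : 0 ≤ δ)
    (hdecomp : ∀ t : ℝ, 0 ≤ t →
      x t = x 0 + δ * t + ∑' s : Set.Ioc (0:ℝ) t, (x s - Function.leftLim x s))
    {p u : ℝ} (hp : 0 ≤ p) (hpu : p ≤ u) :
    truncRunningInf x p - truncRunningInf x u ≤ ∑' v : Ioc p u, |x v - Function.leftLim x v| := by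
  refine truncRunningInf_sub_le (fun t ht ↦ (hbv t ht).bddBelow_image) hp hpu
    (tsum_nonneg fun _ ↦ abs_nonneg _) fun s hs ↦ ?_
  exact (sub_le_tsum_abs_jump hbv hδ hdecomp hp hs.1.le).trans
    (tsum_subtype_le_of_subset (g := fun v ↦ |x v - Function.leftLim x v|)
      (Ioc_subset_Ioc_right hs.2) (fun _ _ ↦ abs_nonneg _) (summable_abs_sub_leftLim hbv hp hpu))

theorem truncRunningInf_sub_leftLim_eq {v : ℝ} (hv : 0 < v) :
    truncRunningInf x v - Function.leftLim (truncRunningInf x) v =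
      min (Function.leftLim (fun s ↦ x s - truncRunningInf x s) v +
        (x v - Function.leftLim x v)) 0 := by
  have hx : ∀ t, 0 ≤ t → BddBelow (x '' Icc 0 t) := fun t ht ↦ (hbv t ht).bddBelow_image
  have hxv := (hbv v hv.le).tendsto_leftLim_of_mem_Ioc ⟨hv, le_rfl⟩
  rw [leftLim_eq_of_tendsto (hxv.sub ((antitone_truncRunningInf hx).tendsto_leftLim v)),
    truncRunningInf_sub_leftLim hx hv]
  congr 1
  ring

end DriftPlusJumps

theorem stmt4_general (x : ℝ → ℝ)
    (hbv : ∀ t : ℝ, 0 ≤ t → BoundedVariationOn x (Set.Icc 0 t))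
    (δ : ℝ) (hδ : 0 < δ)
    (hdecomp : ∀ t : ℝ, 0 ≤ t →
      x t = x 0 + δ * t + ∑' s : Set.Ioc (0:ℝ) t, (x s - Function.leftLim x s))
    (I xc : ℝ → ℝ)
    (hI : ∀ t : ℝ, I t = sInf ((fun s => min (x s) 0) '' Set.Icc 0 t))
    (hxc : ∀ t : ℝ, xc t = x t - I t) :
    ∀ t : ℝ, 0 ≤ t →
      I t = min (x 0) 0
          + ∑' s : Set.Ioc (0:ℝ) t,
              min (Function.leftLim xc s + (x s - Function.leftLim x s)) 0 := by
  obtain rfl : I = truncRunningInf x := funext hI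
  obtain rfl : xc = fun s ↦ x s - truncRunningInf x s := funext hxc
  intro t ht
  have hanti := antitone_truncRunningInf fun t ht ↦ (hbv t ht).bddBelow_image
  have hjumps := hanti.sub_eq_tsum_leftLim_sub (w := fun v ↦ |x v - Function.leftLim x v|)
    (fun _ _ ↦ abs_nonneg _) (summable_abs_sub_leftLim hbv le_rfl ht)
    (fun p u hp hpu _ ↦ truncRunningInf_sub_le_tsum_abs_jump hbv hδ.le hdecomp hp hpu) ht
  rw [← truncRunningInf_zero,
    ← tsum_congr fun v : Ioc (0:ℝ) t ↦ truncRunningInf_sub_leftLim_eq hbv v.2.1]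
  simp only [← neg_sub (Function.leftLim _ _), tsum_neg]
  linarith

/-- for a càdlàg bounded-variation `x` with decomposition
`x t = x 0 + δ t + Σ_{s∈(0,t]} (x s - x (s-))` and `δ > 0`, the running truncated
infimum `I t = inf_{s∈[0,t]} (x s ∧ 0)` of the reflection `x̌ = x - I` satisfies
`I t = (x 0 ∧ 0) + Σ_{s∈(0,t]} (x̌(s-) + (x s - x(s-))) ∧ 0`. -/
theorem stmt4 (x : ℝ → ℝ) (hx : Cadlag x)
    (hbv : ∀ t : ℝ, 0 ≤ t → BoundedVariationOn x (Set.Icc 0 t))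
    (δ : ℝ) (hδ : 0 < δ)
    (hdecomp : ∀ t : ℝ, 0 ≤ t →
      x t = x 0 + δ * t + ∑' s : Set.Ioc (0:ℝ) t, (x s - Function.leftLim x s))
    (I xc : ℝ → ℝ)
    (hI : ∀ t : ℝ, I t = sInf ((fun s => min (x s) 0) '' Set.Icc 0 t))
    (hxc : ∀ t : ℝ, xc t = x t - I t) :
    ∀ t : ℝ, 0 ≤ t →
      I t = min (x 0) 0
          + ∑' s : Set.Ioc (0:ℝ) t,
              min (Function.leftLim xc s + (x s - Function.leftLim x s)) 0 :=
  stmt4_general x hbv δ hδ hdecomp I xc hI hxc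
end

section
/- Let x : [0,∞) → ℝ be a càdlàg function of bounded variation with drift δ ∈ ℝ (i.e., x_t = x_0 + δ t + Σ_{s ∈ (0,t]} (x_s − x_{s−})), let α > 0, b ∈ ℝ, and define h^b(y) = α·1_{(b,∞)}(y) if δ ∉ [0,α], and h^b(y) = α·1_{(b,∞)}(y) + δ·1_{{b}}(y) if δ ∈ [0,α]. Then the integral equation y_t = x_t − ∫_0^t h^b(y_s) ds, t ≥ 0, has at most one solution: if y and ỹ both satisfy this equation for all t ≥ 0, then y_t = ỹ_t for all t ≥ 0. -/
open MeasureTheory Filter Topology Set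

/-!
Since `h^b` is non-decreasing, the difference of two solutions
`D t = y t - ỹ t = ∫_0^t (h^b(ỹ s) - h^b(y s)) ds` is a continuous function with `D 0 = 0`
whose integrand is `≤ 0` wherever `D > 0`. Hence `D` cannot become positive: after the
last time `t₀ ≤ t` with `D t₀ ≤ 0` it can only decrease. Exchanging the solutions gives
`D ≥ 0`.
-/

lemma monotone_indicator_Ioi_add_indicator_singleton {α δ b : ℝ} (hα : 0 ≤ α) :
    Monotone fun y => (Ioi b).indicator (fun _ => α) y +
      (if δ ∈ Icc 0 α then ({b} : Set ℝ).indicator (fun _ => δ) y else 0) := by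
  intro u v huv
  simp only [indicator_apply, mem_Ioi, mem_singleton_iff]
  split_ifs <;> grind

lemma setIntegral_Ioc_add_Ioc {g : ℝ → ℝ} {a s t : ℝ} (has : a ≤ s) (hst : s ≤ t)
    (hg : IntegrableOn g (Ioc a t)) :
    ∫ u in Ioc a t, g u = (∫ u in Ioc a s, g u) + ∫ u in Ioc s t, g u := by
  rw [← Ioc_union_Ioc_eq_Ioc has hst, setIntegral_union (Ioc_disjoint_Ioc_of_le le_rfl)
    measurableSet_Ioc (hg.mono_set (Ioc_subset_Ioc_right hst))
    (hg.mono_set (Ioc_subset_Ioc_left has))]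

lemma setIntegral_Ioc_nonpos_of_nonpos_where_pos {g : ℝ → ℝ}
    (hg : ∀ t, 0 ≤ t → IntegrableOn g (Ioc 0 t))
    (hsign : ∀ s, 0 < s → 0 < ∫ u in Ioc 0 s, g u → g s ≤ 0)
    {t : ℝ} (ht : 0 ≤ t) : ∫ u in Ioc 0 t, g u ≤ 0 := by
  set F : ℝ → ℝ := fun t => ∫ u in Ioc 0 t, g u
  by_contra! hFt
  have hF : ContinuousOn F (Icc 0 t) :=
    intervalIntegral.continuousOn_primitive ((integrableOn_Icc_iff_integrableOn_Ioc).mpr (hg t ht))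
  set S := Icc 0 t ∩ F ⁻¹' Iic 0
  have hS : IsCompact S :=
    isCompact_Icc.of_isClosed_subset (hF.preimage_isClosed_of_isClosed isClosed_Icc isClosed_Iic)
      inter_subset_left
  have h0S : (0 : ℝ) ∈ S := ⟨⟨le_rfl, ht⟩, by simp [F]⟩
  obtain ⟨⟨ht₀, ht₀t⟩, hFt₀⟩ := hS.sSup_mem ⟨0, h0S⟩
  set t₀ := sSup S
  have hpos : ∀ s ∈ Ioc t₀ t, 0 < F s := fun s hs => by
    by_contra! hFs
    exact (le_csSup hS.bddAbove ⟨⟨ht₀.trans hs.1.le, hs.2⟩, hFs⟩).not_gt hs.1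
  have hdecr : ∫ u in Ioc t₀ t, g u ≤ 0 :=
    setIntegral_nonpos measurableSet_Ioc fun s hs =>
      hsign s (ht₀.trans_lt hs.1) (hpos s hs)
  have : F t = F t₀ + ∫ u in Ioc t₀ t, g u := setIntegral_Ioc_add_Ioc ht₀ ht₀t (hg t ht)
  linarith [show F t₀ ≤ 0 from hFt₀]

lemma solution_le_of_monotone {h x y z : ℝ → ℝ} (hh : Monotone h)
    (hyint : ∀ t, 0 ≤ t → IntegrableOn (fun s => h (y s)) (Ioc 0 t))
    (hzint : ∀ t, 0 ≤ t → IntegrableOn (fun s => h (z s)) (Ioc 0 t))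
    (hy : ∀ t, 0 ≤ t → y t = x t - ∫ s in Ioc 0 t, h (y s))
    (hz : ∀ t, 0 ≤ t → z t = x t - ∫ s in Ioc 0 t, h (z s)) :
    ∀ t, 0 ≤ t → y t ≤ z t := by
  have hdiff : ∀ t, 0 ≤ t → y t - z t = ∫ s in Ioc 0 t, (h (z s) - h (y s)) := by
    intro t ht
    rw [hy t ht, hz t ht, integral_sub (hzint t ht) (hyint t ht)]
    ring
  intro t ht
  have := setIntegral_Ioc_nonpos_of_nonpos_where_pos (g := fun s => h (z s) - h (y s))
    (fun t ht => (hzint t ht).sub (hyint t ht))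
    (fun s hs hpos => sub_nonpos.mpr (hh (by linarith [hdiff s hs.le]))) ht
  linarith [hdiff t ht]

theorem stmt5_general (x : ℝ → ℝ)
    (δ : ℝ)
    (α : ℝ) (hα : 0 < α) (b : ℝ)
    (hb : ℝ → ℝ)
    (hhb : hb = fun y =>
      Set.indicator (Set.Ioi b) (fun _ => α) y +
        (if δ ∈ Set.Icc 0 α then Set.indicator ({b} : Set ℝ) (fun _ => δ) y else 0))
    (y ytil : ℝ → ℝ)
    (hyint : ∀ t : ℝ, 0 ≤ t →
      MeasureTheory.IntegrableOn (fun s => hb (y s)) (Set.Ioc 0 t))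
    (hytint : ∀ t : ℝ, 0 ≤ t →
      MeasureTheory.IntegrableOn (fun s => hb (ytil s)) (Set.Ioc 0 t))
    (hy : ∀ t : ℝ, 0 ≤ t → y t = x t - ∫ s in Set.Ioc (0:ℝ) t, hb (y s))
    (hyt : ∀ t : ℝ, 0 ≤ t → ytil t = x t - ∫ s in Set.Ioc (0:ℝ) t, hb (ytil s)) :
    ∀ t : ℝ, 0 ≤ t → y t = ytil t := by
  have hmono : Monotone hb := hhb ▸ monotone_indicator_Ioi_add_indicator_singleton hα.le
  intro t ht
  exact le_antisymm (solution_le_of_monotone hmono hyint hytint hy hyt t ht)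
    (solution_le_of_monotone hmono hytint hyint hyt hy t ht)

/-- uniqueness of solutions of the refraction equation
`y t = x t - ∫_0^t h^b(y s) ds` driven by a càdlàg bounded-variation path `x` with
drift `δ`, where `h^b(y) = α·1_{(b,∞)}(y)` if `δ ∉ [0,α]` and
`h^b(y) = α·1_{(b,∞)}(y) + δ·1_{{b}}(y)` if `δ ∈ [0,α]`. -/
theorem stmt5 (x : ℝ → ℝ) (hx : Cadlag x)
    (hbv : ∀ t : ℝ, 0 ≤ t → BoundedVariationOn x (Set.Icc 0 t))
    (δ : ℝ)
    (hdecomp : ∀ t : ℝ, 0 ≤ t →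
      x t = x 0 + δ * t + ∑' s : Set.Ioc (0:ℝ) t, (x s - Function.leftLim x s))
    (α : ℝ) (hα : 0 < α) (b : ℝ)
    (hb : ℝ → ℝ)
    (hhb : hb = fun y =>
      Set.indicator (Set.Ioi b) (fun _ => α) y +
        (if δ ∈ Set.Icc 0 α then Set.indicator ({b} : Set ℝ) (fun _ => δ) y else 0))
    (y ytil : ℝ → ℝ)
    (hyint : ∀ t : ℝ, 0 ≤ t →
      MeasureTheory.IntegrableOn (fun s => hb (y s)) (Set.Ioc 0 t))
    (hytint : ∀ t : ℝ, 0 ≤ t →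
      MeasureTheory.IntegrableOn (fun s => hb (ytil s)) (Set.Ioc 0 t))
    (hy : ∀ t : ℝ, 0 ≤ t → y t = x t - ∫ s in Set.Ioc (0:ℝ) t, hb (y s))
    (hyt : ∀ t : ℝ, 0 ≤ t → ytil t = x t - ∫ s in Set.Ioc (0:ℝ) t, hb (ytil s)) :
    ∀ t : ℝ, 0 ≤ t → y t = ytil t :=
  stmt5_general x δ α hα b hb hhb y ytil hyint hytint hy hyt
end

section
/- Let h : ℝ → ℝ be non-decreasing and bounded, and let x¹, x² : [0,∞) → ℝ be càdlàg with x¹_t − x²_t non-decreasing in t, nonnegative, and continuous (no jumps). Suppose y¹ and y² solve y^i_t = x^i_t − ∫_0^t h(y^i_s) ds for i = 1, 2. Then 0 ≤ y¹_t − y²_t ≤ x¹_t − x²_t for all t ≥ 0. -/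
/-!
Write `D = x¹ - x²` and `G t = ∫_0^t (h(y¹) - h(y²))`, so that `y¹ - y² = D - G`. Both bounds
are instances of one continuation argument for `φ = D' - ∫ f` with `D'` continuous,
non-decreasing and `D'(0) ≥ 0`, where `f ≤ 0` wherever `φ < 0`: after the last time `φ` was
nonnegative, `∫ f` decreases and `D'` increases, so `φ` cannot become negative. For
`y¹ - y² ≥ 0` take `D' = D`; for `y¹ - y² ≤ D`, i.e. `G ≥ 0`, take `D' = 0` and
`f = h(y²) - h(y¹)`, since `G < 0` forces `y¹ - y² > D ≥ 0`, hence `h(y¹) ≥ h(y²)`.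
-/

open MeasureTheory Filter Topology Set

theorem ContinuousOn.nonneg_of_nonneg_before_neg_Ioc {α : Type*}
    [ConditionallyCompleteLinearOrder α] [TopologicalSpace α] [OrderTopology α]
    {φ : α → ℝ} {a b : α} (hab : a ≤ b) (hφ : ContinuousOn φ (Icc a b)) (ha : 0 ≤ φ a)
    (hlast : ∀ s ∈ Icc a b, 0 ≤ φ s → (∀ u ∈ Ioc s b, φ u < 0) → 0 ≤ φ b) :
    0 ≤ φ b := by
  set S := Icc a b ∩ φ ⁻¹' Ici 0
  have haS : a ∈ S := ⟨⟨le_rfl, hab⟩, ha⟩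
  have hSbdd : BddAbove S := ⟨b, fun _ hx => hx.1.2⟩
  have hsupS : sSup S ∈ S :=
    (hφ.preimage_isClosed_of_isClosed isClosed_Icc isClosed_Ici).csSup_mem ⟨a, haS⟩ hSbdd
  refine hlast _ hsupS.1 hsupS.2 fun u hu => ?_
  by_contra! hφu
  exact hu.1.not_ge (le_csSup hSbdd ⟨⟨hsupS.1.1.trans hu.1.le, hu.2⟩, hφu⟩)

theorem setIntegral_Ioc_add_Ioc_s7 {f : ℝ → ℝ} {a b c : ℝ} (hab : a ≤ b) (hbc : b ≤ c)
    (hf : IntegrableOn f (Ioc a c)) :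
    ∫ u in Ioc a c, f u = (∫ u in Ioc a b, f u) + ∫ u in Ioc b c, f u := by
  rw [← Ioc_union_Ioc_eq_Ioc hab hbc]
  exact setIntegral_union (Ioc_disjoint_Ioc_of_le le_rfl) measurableSet_Ioc
    (hf.mono_set (Ioc_subset_Ioc_right hbc)) (hf.mono_set (Ioc_subset_Ioc_left hab))

theorem sub_setIntegral_Ioc_nonneg {D f : ℝ → ℝ} {a b : ℝ} (hab : a ≤ b)
    (hDmono : MonotoneOn D (Icc a b)) (hDcont : ContinuousOn D (Icc a b)) (hDa : 0 ≤ D a)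
    (hf : IntegrableOn f (Ioc a b))
    (hsign : ∀ u ∈ Ioc a b, D u - ∫ s in Ioc a u, f s < 0 → f u ≤ 0) :
    0 ≤ D b - ∫ s in Ioc a b, f s := by
  have hprim : ContinuousOn (fun t => ∫ s in Ioc a t, f s) (Icc a b) :=
    intervalIntegral.continuousOn_primitive (by rwa [integrableOn_Icc_iff_integrableOn_Ioc])
  refine ContinuousOn.nonneg_of_nonneg_before_neg_Ioc (φ := fun t => D t - ∫ s in Ioc a t, f s)
    hab (hDcont.sub hprim) (by simpa using hDa) ?_
  intro s hs hφs hneg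
  have hfs : ∫ u in Ioc s b, f u ≤ 0 := setIntegral_nonpos measurableSet_Ioc fun u hu =>
    hsign u ⟨hs.1.trans_lt hu.1, hu.2⟩ (hneg u hu)
  have hsplit := setIntegral_Ioc_add_Ioc_s7 hs.1 hs.2 hf
  have hDs : D s ≤ D b := hDmono hs ⟨hab, le_rfl⟩ hs.2
  linarith

theorem stmt7_general (h : ℝ → ℝ) (hmono : Monotone h)
    (x1 x2 : ℝ → ℝ)
    (hdmono : MonotoneOn (fun t => x1 t - x2 t) (Set.Ici 0))
    (hdpos : ∀ t : ℝ, 0 ≤ t → 0 ≤ x1 t - x2 t)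
    (hdcont : ContinuousOn (fun t => x1 t - x2 t) (Set.Ici 0))
    (y1 y2 : ℝ → ℝ)
    (hy1int : ∀ t : ℝ, 0 ≤ t →
      MeasureTheory.IntegrableOn (fun s => h (y1 s)) (Set.Ioc 0 t))
    (hy2int : ∀ t : ℝ, 0 ≤ t →
      MeasureTheory.IntegrableOn (fun s => h (y2 s)) (Set.Ioc 0 t))
    (hy1 : ∀ t : ℝ, 0 ≤ t → y1 t = x1 t - ∫ s in Set.Ioc (0:ℝ) t, h (y1 s))
    (hy2 : ∀ t : ℝ, 0 ≤ t → y2 t = x2 t - ∫ s in Set.Ioc (0:ℝ) t, h (y2 s)) :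
    ∀ t : ℝ, 0 ≤ t → 0 ≤ y1 t - y2 t ∧ y1 t - y2 t ≤ x1 t - x2 t := by
  have hrep : ∀ u, 0 ≤ u →
      y1 u - y2 u = (x1 u - x2 u) - ∫ s in Ioc 0 u, (h (y1 s) - h (y2 s)) := by
    intro u hu
    rw [integral_sub (hy1int u hu) (hy2int u hu), hy1 u hu, hy2 u hu]
    ring
  have hswap : ∀ u, ∫ s in Ioc 0 u, (h (y2 s) - h (y1 s)) =
      -∫ s in Ioc 0 u, (h (y1 s) - h (y2 s)) := fun u => by
    simp only [← integral_neg, neg_sub]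
  intro t ht
  have hlower := sub_setIntegral_Ioc_nonneg (D := fun t => x1 t - x2 t)
    (f := fun s => h (y1 s) - h (y2 s)) ht (hdmono.mono Icc_subset_Ici_self)
    (hdcont.mono Icc_subset_Ici_self) (hdpos 0 le_rfl) ((hy1int t ht).sub (hy2int t ht))
    fun u hu hneg => sub_nonpos.2 <| hmono <| by linarith [hrep u hu.1.le]
  have hupper := sub_setIntegral_Ioc_nonneg (D := fun _ => 0)
    (f := fun s => h (y2 s) - h (y1 s)) ht monotoneOn_const continuousOn_const le_rfl
    ((hy2int t ht).sub (hy1int t ht))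
    fun u hu hneg => sub_nonpos.2 <| hmono <| by
      linarith [hrep u hu.1.le, hswap u, hdpos u hu.1.le]
  rw [hswap] at hupper
  rw [hrep t ht]
  constructor <;> linarith

/-- comparison of two solutions of `yⁱ t = xⁱ t - ∫_0^t h(yⁱ s) ds`
for a non-decreasing bounded `h`, when `x¹ - x²` is non-decreasing, nonnegative and
continuous on `[0,∞)`: then `0 ≤ y¹ - y² ≤ x¹ - x²` on `[0,∞)`. -/
theorem stmt7 (h : ℝ → ℝ) (hmono : Monotone h) (C : ℝ) (hbdd : ∀ y : ℝ, |h y| ≤ C)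
    (x1 x2 : ℝ → ℝ) (hx1 : Cadlag x1) (hx2 : Cadlag x2)
    (hdmono : MonotoneOn (fun t => x1 t - x2 t) (Set.Ici 0))
    (hdpos : ∀ t : ℝ, 0 ≤ t → 0 ≤ x1 t - x2 t)
    (hdcont : ContinuousOn (fun t => x1 t - x2 t) (Set.Ici 0))
    (y1 y2 : ℝ → ℝ)
    (hy1int : ∀ t : ℝ, 0 ≤ t →
      MeasureTheory.IntegrableOn (fun s => h (y1 s)) (Set.Ioc 0 t))
    (hy2int : ∀ t : ℝ, 0 ≤ t →
      MeasureTheory.IntegrableOn (fun s => h (y2 s)) (Set.Ioc 0 t))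
    (hy1 : ∀ t : ℝ, 0 ≤ t → y1 t = x1 t - ∫ s in Set.Ioc (0:ℝ) t, h (y1 s))
    (hy2 : ∀ t : ℝ, 0 ≤ t → y2 t = x2 t - ∫ s in Set.Ioc (0:ℝ) t, h (y2 s)) :
    ∀ t : ℝ, 0 ≤ t → 0 ≤ y1 t - y2 t ∧ y1 t - y2 t ≤ x1 t - x2 t :=
  stmt7_general h hmono x1 x2 hdmono hdpos hdcont y1 y2 hy1int hy2int hy1 hy2
end

section
/- Let g : ℝ → ℝ be non-increasing and v : ℝ → ℝ satisfy v(x+ε) − v(x) ≤ ε·g(x) ≤ v(x) − v(x−ε) for all x ∈ ℝ, ε > 0. Then g is a density of v with respect to Lebesgue measure: v(y) − v(x) = ∫_x^y g(u) du for all x < y. -/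
open Set intervalIntegral Filter Topology Function

/-- if a non-increasing `g` is squeezed between forward and backward
difference quotients of `v` at every point, then `g` is a density of `v` with
respect to Lebesgue measure: `v y - v x = ∫_x^y g(u) du` for all `x < y`. -/
theorem stmt13 (g v : ℝ → ℝ) (hg : Antitone g)
    (hsq : ∀ x ε : ℝ, 0 < ε →
      v (x + ε) - v x ≤ ε * g x ∧ ε * g x ≤ v x - v (x - ε)) :
    ∀ x y : ℝ, x < y → v y - v x = ∫ u in x..y, g u := by
  -- the basic sandwich: for a < b, (b-a) g b ≤ v b - v a ≤ (b-a) g a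
  have key : ∀ a b : ℝ, a < b → (b - a) * g b ≤ v b - v a ∧ v b - v a ≤ (b - a) * g a := by
    intro a b hab
    have hε : (0:ℝ) < b - a := by linarith
    have h1 := (hsq a (b - a) hε).1
    have h2 := (hsq b (b - a) hε).2
    have e1 : a + (b - a) = b := by ring
    have e2 : b - (b - a) = a := by ring
    rw [e1] at h1; rw [e2] at h2
    exact ⟨h2, h1⟩
  set G : ℝ → ℝ := Function.rightLim g with hGdef
  have hG : Antitone G := hg.rightLim
  have hGle : ∀ t, G t ≤ g t := fun t => hg.rightLim_le le_rfl
  have hleG : ∀ t s : ℝ, t < s → g s ≤ G t := fun t s h => hg.le_rightLim h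
  have htend : ∀ t : ℝ, Tendsto g (𝓝[>] t) (𝓝 (G t)) := fun t => hg.tendsto_rightLim t
  -- refined upper bound: v s - v t ≤ (s - t) * G t
  have keyG : ∀ t s : ℝ, t < s → v s - v t ≤ (s - t) * G t := by
    intro t s hts
    have hu : Tendsto (fun u : ℝ => u) (𝓝[>] t) (𝓝 t) :=
      tendsto_id.mono_left nhdsWithin_le_nhds
    have hφ : Tendsto (fun u : ℝ => (s - u) * g u + (u - t) * g t) (𝓝[>] t)
        (𝓝 ((s - t) * G t + (t - t) * g t)) :=
      ((tendsto_const_nhds.sub hu).mul (htend t)).add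
        ((hu.sub tendsto_const_nhds).mul tendsto_const_nhds)
    have hφ' : Tendsto (fun u : ℝ => (s - u) * g u + (u - t) * g t) (𝓝[>] t)
        (𝓝 ((s - t) * G t)) := by
      simpa using hφ
    refine ge_of_tendsto hφ' ?_
    filter_upwards [Ioo_mem_nhdsGT_of_mem ⟨le_rfl, hts⟩] with u hu'
    obtain ⟨htu, hus⟩ := hu'
    have h1 := (key u s hus).2
    have h2 := (key t u htu).2
    linarith
  intro x y hxy
  -- v is Lipschitz on Icc x y
  have hcont : ContinuousOn v (Icc x y) := by
    set C : ℝ := max |g x| |g y| with hC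
    have hbound : ∀ a ∈ Icc x y, ∀ b ∈ Icc x y, dist (v a) (v b) ≤ C * dist a b := by
      have habs : ∀ a ∈ Icc x y, ∀ b ∈ Icc x y, a ≤ b → |v b - v a| ≤ C * (b - a) := by
        intro a ha b hb hab
        rcases eq_or_lt_of_le hab with rfl | hab
        · simp
        obtain ⟨h1, h2⟩ := key a b hab
        have hga : g a ≤ |g x| := le_trans (hg ha.1) (le_abs_self _)
        have hgb : -|g y| ≤ g b := le_trans (neg_abs_le _) (hg hb.2)
        have hC1 : g a ≤ C := le_trans hga (le_max_left _ _)
        have hC2 : -C ≤ g b := le_trans (neg_le_neg (le_max_right _ _)) hgb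
        rw [abs_le]
        constructor <;> nlinarith
      intro a ha b hb
      rw [Real.dist_eq, Real.dist_eq]
      rcases le_total a b with hab | hab
      · rw [abs_sub_comm (v a), abs_sub_comm a, abs_of_nonneg (by linarith : (0:ℝ) ≤ b - a)]
        exact habs a ha b hb hab
      · rw [abs_of_nonneg (by linarith : (0:ℝ) ≤ a - b)]
        exact habs b hb a ha hab
    have : LipschitzOnWith (Real.toNNReal C) v (Icc x y) := by
      apply LipschitzOnWith.of_dist_le' (K := C)
      intro a ha b hb
      exact hbound a ha b hb
    exact this.continuousOn
  -- right derivative of v is G everywhere on Ioo x y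
  have hderiv : ∀ t ∈ Ioo x y, HasDerivWithinAt v (G t) (Ioi t) t := by
    intro t _
    rw [hasDerivWithinAt_iff_tendsto_slope]
    have hset : Ioi t \ {t} = Ioi t := Set.diff_singleton_eq_self (by simp)
    rw [hset]
    apply tendsto_of_tendsto_of_tendsto_of_le_of_le' (htend t) tendsto_const_nhds
    · filter_upwards [self_mem_nhdsWithin] with s hs
      have hts : t < s := hs
      have h := (key t s hts).1
      rw [slope_def_field]
      exact (le_div_iff₀ (by linarith)).2 (by linear_combination h)
    · filter_upwards [self_mem_nhdsWithin] with s hs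
      have hts : t < s := hs
      have h := keyG t s hts
      rw [slope_def_field]
      exact (div_le_iff₀ (by linarith)).2 (by linear_combination h)
  have hint : IntervalIntegrable G MeasureTheory.volume x y := hG.intervalIntegrable
  have hFTC := integral_eq_sub_of_hasDeriv_right_of_le hxy.le hcont hderiv hint
  rw [← hFTC]
  -- G = g a.e.
  apply intervalIntegral.integral_congr_ae
  have hcount : Set.Countable {t | ¬ContinuousAt g t} := hg.countable_not_continuousAt
  have hzero : MeasureTheory.volume {t | ¬ContinuousAt g t} = 0 := hcount.measure_zero _
  have hae : ∀ᵐ t ∂MeasureTheory.volume, ContinuousAt g t := by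
    rw [MeasureTheory.ae_iff]
    simpa using hzero
  filter_upwards [hae] with t ht _
  have : rightLim g t = g t :=
    hg.continuousWithinAt_Ioi_iff_rightLim_eq.1 ht.continuousWithinAt
  exact this
end

section
/- Let x : [0,∞) → ℝ be continuous, b ∈ ℝ, 0 < α₁ < α₂, and let h^{α,b}(y) = α·1_{(b,∞)}(y). Suppose y¹ and y² are solutions of y^i_t = x_t − ∫_0^t h^{α_i, b}(y^i_s) ds for i = 1, 2 (with α₁ for y¹ and α₂ for y²). Then y¹_t ≥ y²_t for all t ≥ 0. -/
/-!
The gap `y² - y¹` is the primitive of `h^{α₁,b}(y¹) - h^{α₂,b}(y²)`, and this integrand is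
nonpositive wherever the gap is positive, because `α * 1_{(b,∞)}(y)` is monotone in `α ≥ 0`
and in `y`. A continuous primitive starting at `0` that cannot increase while it is positive
stays nonpositive: after the last time it is `≤ 0` it could only decrease.
-/

open MeasureTheory Set

theorem ContinuousOn.exists_nonpos_forall_Ioc_pos {F : ℝ → ℝ} {a t : ℝ}
    (hF : ContinuousOn F (Icc a t)) (hat : a ≤ t) (ha : F a ≤ 0) :
    ∃ s ∈ Icc a t, F s ≤ 0 ∧ ∀ u ∈ Ioc s t, 0 < F u := by
  have hclosed : IsClosed (Icc a t ∩ F ⁻¹' Iic 0) :=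
    hF.preimage_isClosed_of_isClosed isClosed_Icc isClosed_Iic
  obtain ⟨s, ⟨hs, hFs⟩, hmax⟩ :=
    (isCompact_Icc.of_isClosed_subset hclosed inter_subset_left).exists_isGreatest
      ⟨a, left_mem_Icc.mpr hat, ha⟩
  refine ⟨s, hs, hFs, fun u hu => ?_⟩
  by_contra! hFu
  exact (hmax ⟨⟨hs.1.trans hu.1.le, hu.2⟩, hFu⟩).not_gt hu.1

theorem setIntegral_Ioc_nonpos_of_nonpos_of_pos {g : ℝ → ℝ} {a t : ℝ} (ht : a ≤ t)
    (hg : IntegrableOn g (Ioc a t))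
    (hneg : ∀ s, a ≤ s → 0 < ∫ u in Ioc a s, g u → g s ≤ 0) :
    ∫ u in Ioc a t, g u ≤ 0 := by
  have hgIcc : IntegrableOn g (Icc a t) :=
    (integrableOn_Icc_iff_integrableOn_Ioc (f := g)).mpr hg
  obtain ⟨s, ⟨has, hst⟩, hFs, hpos⟩ :=
    (intervalIntegral.continuousOn_primitive hgIcc).exists_nonpos_forall_Ioc_pos ht (by simp)
  have htail : ∫ u in Ioc s t, g u ≤ 0 :=
    setIntegral_nonpos measurableSet_Ioc fun u hu => hneg u (has.trans hu.1.le) (hpos u hu)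
  calc ∫ u in Ioc a t, g u = (∫ u in Ioc a s, g u) + ∫ u in Ioc s t, g u := by
        rw [← Ioc_union_Ioc_eq_Ioc has hst, setIntegral_union (Ioc_disjoint_Ioc_of_le le_rfl)
          measurableSet_Ioc (hg.mono_set (Ioc_subset_Ioc_right hst))
          (hg.mono_set (Ioc_subset_Ioc_left has))]
    _ ≤ 0 := add_nonpos hFs htail

theorem mul_indicator_Ioi_le_mul_indicator_Ioi {α₁ α₂ b y₁ y₂ : ℝ} (hα₂ : 0 ≤ α₂)
    (hα : α₁ ≤ α₂) (hy : y₁ ≤ y₂) :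
    α₁ * (Ioi b).indicator (fun _ => (1 : ℝ)) y₁ ≤
      α₂ * (Ioi b).indicator (fun _ => (1 : ℝ)) y₂ := by
  simp only [indicator_apply, mem_Ioi]
  split_ifs <;> linarith

theorem stmt16_general (x : ℝ → ℝ) (b : ℝ)
    (α₁ α₂ : ℝ) (h0 : 0 < α₁) (h12 : α₁ < α₂)
    (h : ℝ → ℝ → ℝ)
    (hh : ∀ α y : ℝ, h α y = α * Set.indicator (Set.Ioi b) (fun _ => (1:ℝ)) y)
    (y1 y2 : ℝ → ℝ)
    (hy1int : ∀ t : ℝ, 0 ≤ t →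
      MeasureTheory.IntegrableOn (fun s => h α₁ (y1 s)) (Set.Ioc 0 t))
    (hy2int : ∀ t : ℝ, 0 ≤ t →
      MeasureTheory.IntegrableOn (fun s => h α₂ (y2 s)) (Set.Ioc 0 t))
    (hy1 : ∀ t : ℝ, 0 ≤ t → y1 t = x t - ∫ s in Set.Ioc (0:ℝ) t, h α₁ (y1 s))
    (hy2 : ∀ t : ℝ, 0 ≤ t → y2 t = x t - ∫ s in Set.Ioc (0:ℝ) t, h α₂ (y2 s)) :
    ∀ t : ℝ, 0 ≤ t → y2 t ≤ y1 t := by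
  set g : ℝ → ℝ := fun s => h α₁ (y1 s) - h α₂ (y2 s)
  have hgap : ∀ t, 0 ≤ t → ∫ s in Ioc 0 t, g s = y2 t - y1 t := fun t ht => by
    rw [integral_sub (hy1int t ht) (hy2int t ht)]
    linarith [hy1 t ht, hy2 t ht]
  have hg_nonpos : ∀ s, 0 ≤ s → 0 < ∫ u in Ioc 0 s, g u → g s ≤ 0 := fun s hs hpos => by
    rw [hgap s hs] at hpos
    simp only [g, hh, sub_nonpos]
    exact mul_indicator_Ioi_le_mul_indicator_Ioi (h0.trans h12).le h12.le (by linarith)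
  intro t ht
  have hgap_nonpos := setIntegral_Ioc_nonpos_of_nonpos_of_pos (g := g) ht
    ((hy1int t ht).sub (hy2int t ht)) hg_nonpos
  linarith [hgap t ht]

/-- comparison principle for refracted paths driven by a continuous
path `x`: if `y¹` solves the refraction equation with rate `α₁` and `y²` with rate
`α₂`, where `0 < α₁ < α₂` and `h^{α,b}(y) = α·1_{(b,∞)}(y)`, then `y¹ ≥ y²`. -/
theorem stmt16 (x : ℝ → ℝ) (hx : Continuous x) (b : ℝ)
    (α₁ α₂ : ℝ) (h0 : 0 < α₁) (h12 : α₁ < α₂)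
    (h : ℝ → ℝ → ℝ)
    (hh : ∀ α y : ℝ, h α y = α * Set.indicator (Set.Ioi b) (fun _ => (1:ℝ)) y)
    (y1 y2 : ℝ → ℝ)
    (hy1int : ∀ t : ℝ, 0 ≤ t →
      MeasureTheory.IntegrableOn (fun s => h α₁ (y1 s)) (Set.Ioc 0 t))
    (hy2int : ∀ t : ℝ, 0 ≤ t →
      MeasureTheory.IntegrableOn (fun s => h α₂ (y2 s)) (Set.Ioc 0 t))
    (hy1 : ∀ t : ℝ, 0 ≤ t → y1 t = x t - ∫ s in Set.Ioc (0:ℝ) t, h α₁ (y1 s))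
    (hy2 : ∀ t : ℝ, 0 ≤ t → y2 t = x t - ∫ s in Set.Ioc (0:ℝ) t, h α₂ (y2 s)) :
    ∀ t : ℝ, 0 ≤ t → y2 t ≤ y1 t :=
  stmt16_general x b α₁ α₂ h0 h12 h hh y1 y2 hy1int hy2int hy1 hy2
end

section
/- Let x : [0,∞) → ℝ be càdlàg of bounded variation with jumps summable on compacts, and for ε > 0 define x^{(ε)}_t = x_t − Σ_{s∈(0,t]} (x_s − x_{s−})·1_{{x_s − x_{s−} ∈ (0,ε)}}. Then each x^{(ε)} has only finitely many positive jumps on each compact interval, x^{(ε)}_t ≤ x_t for all t, the map ε ↦ x^{(ε)}_t is non-increasing, and x^{(ε)} → x uniformly on compact intervals as ε ↓ 0. -/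
/-!
Write `Σ_ε(t) = ∑_{s ∈ (0,t]} Δx_s 1{Δx_s ∈ (0,ε)}` for the removed mass, so `x^(ε) = x - Σ_ε`.
Its summands are nonnegative, bounded by `|Δx_s|` and increasing in `ε`, which gives
`x^(ε) ≤ x` and the monotonicity in `ε`. By dominated convergence for series, `Σ_ε(t)` tends
to the sum over `(0,s)` as `t ↑ s`, so the jump of `x^(ε)` at `s` is `Δx_s` minus its removed
part; a positive jump therefore has `Δx_s ≥ ε`, and a summable family has only finitely many
terms that large. Finally `0 ≤ x - x^(ε) ≤ Σ_ε(T)` on `[0,T]`, and `Σ_ε(T) → 0` by dominated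
convergence again, since each summand lies in `[0, ε]`.
-/

open MeasureTheory Filter Topology Set

open Function

theorem Summable.finite_setOf_le_norm {ι E : Type*} [NormedAddCommGroup E] {f : ι → E}
    (hf : Summable f) {ε : ℝ} (hε : 0 < ε) : {i | ε ≤ ‖f i‖}.Finite := by
  have hsmall : ∀ᶠ i in cofinite, ‖f i‖ < ε :=
    (tendsto_norm_zero.comp hf.tendsto_cofinite_zero).eventually (gt_mem_nhds hε)
  simpa only [not_lt] using eventually_cofinite.1 hsmall

theorem tendstoUniformlyOn_of_dist_le {ι α β : Type*} [PseudoMetricSpace α] {F : ι → β → α}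
    {f : β → α} {p : Filter ι} {S : Set β} {b : ι → ℝ} (hb : Tendsto b p (𝓝 0))
    (hFf : ∀ᶠ i in p, ∀ y ∈ S, dist (f y) (F i y) ≤ b i) : TendstoUniformlyOn F f p S := by
  rw [Metric.tendstoUniformlyOn_iff]
  intro δ hδ
  filter_upwards [hFf, hb.eventually (gt_mem_nhds hδ)] with i hi hbi y hy
  exact (hi y hy).trans_lt hbi

theorem tendsto_tsum_Ioc_nhdsLT {f : ℝ → ℝ} {a s : ℝ} (hf : Summable fun u : Ioo a s => f u) :
    Tendsto (fun t => ∑' u : Ioc a t, f u) (𝓝[<] s) (𝓝 (∑' u : Ioo a s, f u)) := by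
  simp only [tsum_subtype]
  refine tendsto_tsum_of_dominated_convergence (summable_subtype_iff_indicator.1 hf).abs
    (fun u => tendsto_const_nhds.congr' ?_) ?_
  · rcases lt_or_ge u s with hus | hsu
    · filter_upwards [Ioo_mem_nhdsLT hus] with t ht
      simp only [indicator_apply, mem_Ioo, mem_Ioc, hus, ht.1.le, and_true]
    · filter_upwards [self_mem_nhdsWithin] with t (ht : t < s)
      rw [indicator_of_notMem (fun h => hsu.not_gt h.2),
        indicator_of_notMem (fun h => (ht.trans_le hsu).not_ge h.2)]
  · filter_upwards [self_mem_nhdsWithin] with t (ht : t < s) u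
    by_cases hu : u ∈ Ioc a t
    · rw [indicator_of_mem hu, Real.norm_eq_abs,
        indicator_of_mem (show u ∈ Ioo a s from ⟨hu.1, hu.2.trans_lt ht⟩)]
    · rw [indicator_of_notMem hu, norm_zero]
      exact abs_nonneg _

theorem tsum_Ioc_eq_tsum_Ioo_add {f : ℝ → ℝ} {a s : ℝ} (has : a < s)
    (hf : Summable fun u : Ioo a s => f u) :
    ∑' u : Ioc a s, f u = ∑' u : Ioo a s, f u + f s := by
  rw [← Ioo_union_right has, Summable.tsum_union_disjoint (by simp) hf .of_finite, tsum_singleton]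

theorem leftLim_sub_tsum_Ioc {x f : ℝ → ℝ} {a s l : ℝ} (hx : Tendsto x (𝓝[<] s) (𝓝 l))
    (hf : Summable fun u : Ioo a s => f u) :
    leftLim (fun t => x t - ∑' u : Ioc a t, f u) s = l - ∑' u : Ioo a s, f u :=
  leftLim_eq_of_tendsto (hx.sub (tendsto_tsum_Ioc_nhdsLT hf))

noncomputable def jump (x : ℝ → ℝ) (s : ℝ) : ℝ := x s - leftLim x s

theorem jump_sub_tsum_Ioc {x f : ℝ → ℝ} {a s : ℝ} (hx : Tendsto x (𝓝[<] s) (𝓝 (leftLim x s)))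
    (has : a < s) (hf : Summable fun u : Ioc a s => f u) :
    jump (fun t => x t - ∑' u : Ioc a t, f u) s = jump x s - f s := by
  have hf' : Summable fun u : Ioo a s => f u :=
    hf.comp_injective (inclusion_injective Ioo_subset_Ioc_self)
  rw [jump, jump, leftLim_sub_tsum_Ioc hx hf', tsum_Ioc_eq_tsum_Ioo_add has hf']
  ring

noncomputable def smallPosPart (ε r : ℝ) : ℝ := if r ∈ Ioo 0 ε then r else 0

theorem smallPosPart_nonneg (ε r : ℝ) : 0 ≤ smallPosPart ε r := by
  unfold smallPosPart
  split_ifs with h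
  exacts [h.1.le, le_rfl]

theorem smallPosPart_le_abs (ε r : ℝ) : smallPosPart ε r ≤ |r| := by
  unfold smallPosPart
  split_ifs
  exacts [le_abs_self r, abs_nonneg r]

theorem smallPosPart_le {ε : ℝ} (hε : 0 ≤ ε) (r : ℝ) : smallPosPart ε r ≤ ε := by
  unfold smallPosPart
  split_ifs with h
  exacts [h.2.le, hε]

theorem monotone_smallPosPart (r : ℝ) : Monotone fun ε => smallPosPart ε r := by
  intro ε₁ ε₂ h
  by_cases h₁ : r ∈ Ioo 0 ε₁
  · simp only [smallPosPart, if_pos h₁, if_pos (Ioo_subset_Ioo_right h h₁), le_rfl]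
  · simp only [smallPosPart, if_neg h₁]
    exact smallPosPart_nonneg ε₂ r

theorem le_of_smallPosPart_lt {ε r : ℝ} (h : smallPosPart ε r < r) : ε ≤ r := by
  unfold smallPosPart at h
  split_ifs at h with hr
  · exact (lt_irrefl r h).elim
  · exact not_lt.1 fun hrε => hr ⟨h, hrε⟩

theorem tendsto_smallPosPart_nhdsGT_zero (r : ℝ) :
    Tendsto (fun ε => smallPosPart ε r) (𝓝[>] 0) (𝓝 0) :=
  tendsto_of_tendsto_of_tendsto_of_le_of_le' tendsto_const_nhds
    (tendsto_id.mono_left nhdsWithin_le_nhds)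
    (Eventually.of_forall fun ε => smallPosPart_nonneg ε r)
    (eventually_nhdsWithin_of_forall fun _ hε => smallPosPart_le hε.le r)

theorem Summable.smallPosPart {ι : Type*} {J : ι → ℝ} (hJ : Summable fun i => |J i|) (ε : ℝ) :
    Summable fun i => smallPosPart ε (J i) :=
  hJ.of_nonneg_of_le (fun _ => smallPosPart_nonneg _ _) (fun _ => smallPosPart_le_abs _ _)

theorem tendsto_tsum_smallPosPart_nhdsGT_zero {ι : Type*} {J : ι → ℝ}
    (hJ : Summable fun i => |J i|) :
    Tendsto (fun ε => ∑' i, smallPosPart ε (J i)) (𝓝[>] 0) (𝓝 0) := by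
  simpa only [tsum_zero] using tendsto_tsum_of_dominated_convergence hJ
    (fun i => tendsto_smallPosPart_nhdsGT_zero (J i)) (Eventually.of_forall fun ε i => by
      rw [Real.norm_of_nonneg (smallPosPart_nonneg _ _)]
      exact smallPosPart_le_abs _ _)

theorem stmt18_general (x : ℝ → ℝ) (hx : Cadlag x)
    (hsum : ∀ T : ℝ, 0 < T →
      Summable (fun s : Set.Ioc (0:ℝ) T => |x s - Function.leftLim x s|))
    (xe : ℝ → ℝ → ℝ)
    (hxe : ∀ ε t : ℝ, xe ε t = x t - ∑' s : Set.Ioc (0:ℝ) t,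
      (if x s - Function.leftLim x s ∈ Set.Ioo 0 ε
        then x s - Function.leftLim x s else 0)) :
    (∀ ε : ℝ, 0 < ε → ∀ T : ℝ, 0 < T →
      {s : ℝ | 0 < s ∧ s ≤ T ∧ Function.leftLim (xe ε) s < xe ε s}.Finite) ∧
    (∀ ε : ℝ, 0 < ε → ∀ t : ℝ, xe ε t ≤ x t) ∧
    (∀ t : ℝ, AntitoneOn (fun ε => xe ε t) (Set.Ioi 0)) ∧
    (∀ T : ℝ, 0 < T →
      TendstoUniformlyOn (fun ε => xe ε) x (nhdsWithin 0 (Set.Ioi 0)) (Set.Icc 0 T)) := by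
  have hxe' : xe = fun ε t => x t - ∑' s : Ioc (0:ℝ) t, smallPosPart ε (jump x s) := by
    funext ε t
    exact hxe ε t
  subst hxe'
  have hJ (t : ℝ) : Summable fun s : Ioc (0:ℝ) t => |jump x s| :=
    (hsum (max t 1) (by positivity)).comp_injective
      (i := inclusion (Ioc_subset_Ioc_right (le_max_left t 1))) (inclusion_injective _)
  refine ⟨fun ε hε T _ => ?_, fun ε _ t => ?_, fun t ε₁ _ ε₂ _ h => ?_, fun T _ => ?_⟩
  · refine (((hJ T).finite_setOf_le_norm hε).image Subtype.val).subset ?_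
    rintro s ⟨hs, hsT, hjump⟩
    have hpos : 0 < jump x s - smallPosPart ε (jump x s) := by
      rw [← jump_sub_tsum_Ioc (f := fun u => smallPosPart ε (jump x u))
        (tendsto_leftLim_of_tendsto (hx.2 s hs)) hs ((hJ s).smallPosPart ε)]
      exact sub_pos.2 hjump
    exact ⟨⟨s, hs, hsT⟩, (le_of_smallPosPart_lt (sub_pos.1 hpos)).trans
      ((le_abs_self _).trans (Real.le_norm_self _)), rfl⟩
  · exact sub_le_self _ (tsum_nonneg fun _ => smallPosPart_nonneg _ _)
  · exact sub_le_sub_left (((hJ t).smallPosPart ε₁).tsum_le_tsum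
      (fun _ => monotone_smallPosPart _ h) ((hJ t).smallPosPart ε₂)) _
  · refine tendstoUniformlyOn_of_dist_le (tendsto_tsum_smallPosPart_nhdsGT_zero (hJ T))
      (Eventually.of_forall fun ε t ht => ?_)
    rw [dist_comm, dist_self_sub_left, Real.norm_of_nonneg
      (tsum_nonneg fun _ => smallPosPart_nonneg _ _)]
    exact tsum_comp_le_tsum_of_inj ((hJ T).smallPosPart ε) (fun _ => smallPosPart_nonneg _ _)
      (inclusion_injective (Ioc_subset_Ioc_right ht.2))

/-- removing from a càdlàg bounded-variation `x` (with jumps summable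
on compacts) all positive jumps of size `< ε` yields `x^(ε)` with only finitely many
positive jumps on compacts, `x^(ε) ≤ x`, `ε ↦ x^(ε) t` non-increasing, and
`x^(ε) → x` uniformly on compacts as `ε ↓ 0`. -/
theorem stmt18 (x : ℝ → ℝ) (hx : Cadlag x)
    (hbv : ∀ t : ℝ, 0 ≤ t → BoundedVariationOn x (Set.Icc 0 t))
    (hsum : ∀ T : ℝ, 0 < T →
      Summable (fun s : Set.Ioc (0:ℝ) T => |x s - Function.leftLim x s|))
    (xe : ℝ → ℝ → ℝ)
    (hxe : ∀ ε t : ℝ, xe ε t = x t - ∑' s : Set.Ioc (0:ℝ) t,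
      (if x s - Function.leftLim x s ∈ Set.Ioo 0 ε
        then x s - Function.leftLim x s else 0)) :
    (∀ ε : ℝ, 0 < ε → ∀ T : ℝ, 0 < T →
      {s : ℝ | 0 < s ∧ s ≤ T ∧ Function.leftLim (xe ε) s < xe ε s}.Finite) ∧
    (∀ ε : ℝ, 0 < ε → ∀ t : ℝ, xe ε t ≤ x t) ∧
    (∀ t : ℝ, AntitoneOn (fun ε => xe ε t) (Set.Ioi 0)) ∧
    (∀ T : ℝ, 0 < T →
      TendstoUniformlyOn (fun ε => xe ε) x (nhdsWithin 0 (Set.Ioi 0)) (Set.Icc 0 T)) :=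
  stmt18_general x hx hsum xe hxe
end
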